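/- Define f : S¹ × S¹ → S¹ × S¹ by f(z,w) = (z, z² w) when Im(z) ≤ 0 and f(z,w) = (z, conj(z)² w) when Im(z) ≥ 0. Then f is a well-defined homeomorphism of the torus, and f commutes with the involution σ(z,w) = (e^{iπ} z, conj(w)). -/

import Mathlib

open Complex

/-- The torus `T² = S¹ × S¹ ⊂ ℂ × ℂ`. -/
abbrev Torus2 : Type := Metric.sphere (0 : ℂ) 1 × Metric.sphere (0 : ℂ) 1

noncomputable def cfun (z : Metric.sphere (0 : ℂ) 1) : ℂ :=
  if (z : ℂ).im ≤ 0 then (z : ℂ) ^ 2 else (starRingEnd ℂ (z : ℂ)) ^ 2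

lemma cfun_norm (z : Metric.sphere (0 : ℂ) 1) : ‖cfun z‖ = 1 := by
  have hz : ‖(z : ℂ)‖ = 1 := mem_sphere_zero_iff_norm.mp z.2
  unfold cfun
  split_ifs <;> simp [norm_pow, hz]

lemma cfun_cont : Continuous cfun := by
  apply Continuous.if_le
  · exact (continuous_subtype_val.pow 2)
  · exact ((Complex.continuous_conj.comp continuous_subtype_val).pow 2)
  · exact Complex.continuous_im.comp continuous_subtype_val
  · exact continuous_const
  · intro x hx
    rw [Complex.conj_eq_iff_im.mpr hx]

lemma cfun_conj_mul (z : Metric.sphere (0 : ℂ) 1) :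
    starRingEnd ℂ (cfun z) * cfun z = 1 := by
  have h : Complex.normSq (cfun z) = 1 := by
    rw [Complex.normSq_eq_norm_sq, cfun_norm]; norm_num
  calc starRingEnd ℂ (cfun z) * cfun z = (Complex.normSq (cfun z) : ℂ) := by
        rw [mul_comm, Complex.mul_conj]
    _ = 1 := by rw [h]; norm_num

lemma cfun_neg (z z' : Metric.sphere (0 : ℂ) 1) (h : (z' : ℂ) = -(z : ℂ)) :
    cfun z' = starRingEnd ℂ (cfun z) := by
  have him : (z' : ℂ).im = -(z : ℂ).im := by rw [h]; simp
  unfold cfun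
  rcases lt_trichotomy (z : ℂ).im 0 with h1 | h1 | h1
  · rw [if_pos h1.le, if_neg (by rw [him]; linarith), map_pow, h, map_neg]
    ring
  · have hc : starRingEnd ℂ (z : ℂ) = (z : ℂ) := Complex.conj_eq_iff_im.mpr h1
    rw [if_pos h1.le, if_pos (by rw [him, h1]; norm_num), h, map_pow, hc]
    ring
  · rw [if_pos (by rw [him]; linarith), if_neg (by linarith), h, map_pow, Complex.conj_conj]
    ring

lemma mem_sphere_mul (z w : Metric.sphere (0 : ℂ) 1) :
    cfun z * (w : ℂ) ∈ Metric.sphere (0 : ℂ) 1 := by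
  rw [mem_sphere_zero_iff_norm, norm_mul, cfun_norm,
    mem_sphere_zero_iff_norm.mp w.2, one_mul]

noncomputable def Fmap : Torus2 → Torus2 :=
  fun p => (p.1, ⟨cfun p.1 * (p.2 : ℂ), mem_sphere_mul p.1 p.2⟩)

noncomputable def Gmap : Torus2 → Torus2 :=
  fun p => (p.1, ⟨starRingEnd ℂ (cfun p.1) * (p.2 : ℂ), by
    rw [mem_sphere_zero_iff_norm, norm_mul, RCLike.norm_conj, cfun_norm,
      mem_sphere_zero_iff_norm.mp p.2.2, one_mul]⟩)

lemma GF (p : Torus2) : Gmap (Fmap p) = p := by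
  unfold Fmap Gmap
  apply Prod.ext
  · rfl
  · apply Subtype.ext
    show starRingEnd ℂ (cfun p.1) * (cfun p.1 * (p.2 : ℂ)) = (p.2 : ℂ)
    rw [← mul_assoc, cfun_conj_mul, one_mul]

lemma FG (p : Torus2) : Fmap (Gmap p) = p := by
  unfold Fmap Gmap
  apply Prod.ext
  · rfl
  · apply Subtype.ext
    show cfun p.1 * (starRingEnd ℂ (cfun p.1) * (p.2 : ℂ)) = (p.2 : ℂ)
    rw [← mul_assoc, mul_comm (cfun p.1), cfun_conj_mul, one_mul]

noncomputable def Fhomeo : Homeomorph Torus2 Torus2 where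
  toFun := Fmap
  invFun := Gmap
  left_inv := GF
  right_inv := FG
  continuous_toFun := by
    refine continuous_fst.prodMk (Continuous.subtype_mk ?_ _)
    exact (cfun_cont.comp continuous_fst).mul (continuous_subtype_val.comp continuous_snd)
  continuous_invFun := by
    refine continuous_fst.prodMk (Continuous.subtype_mk ?_ _)
    exact ((Complex.continuous_conj.comp (cfun_cont.comp continuous_fst))).mul
      (continuous_subtype_val.comp continuous_snd)

/-- The map `f(z,w) = (z, z² w)` for `Im z ≤ 0` and `f(z,w) = (z, conj(z)² w)`
for `Im z ≥ 0` is well defined (the two formulas agree when `Im z = 0`), it is a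
homeomorphism of the torus, and it commutes with the involution `σ(z,w) = (e^{iπ}z, conj w)`. -/
theorem stmt8 (f σ : Torus2 → Torus2)
    (hf₁ : ∀ p : Torus2, (p.1 : ℂ).im ≤ 0 →
      ((f p).1 = p.1 ∧ ((f p).2 : ℂ) = (p.1 : ℂ) ^ 2 * (p.2 : ℂ)))
    (hf₂ : ∀ p : Torus2, 0 ≤ (p.1 : ℂ).im →
      ((f p).1 = p.1 ∧ ((f p).2 : ℂ) = (starRingEnd ℂ (p.1 : ℂ)) ^ 2 * (p.2 : ℂ)))
    (hσ : ∀ p : Torus2,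
      (((σ p).1 : ℂ) = Complex.exp (Real.pi * Complex.I) * (p.1 : ℂ)) ∧
      (((σ p).2 : ℂ) = starRingEnd ℂ (p.2 : ℂ))) :
    -- well-definedness: the two formulas agree on the overlap `Im z = 0`
    (∀ z : ℂ, ‖z‖ = 1 → z.im = 0 → z ^ 2 = (starRingEnd ℂ z) ^ 2) ∧
    -- `f` is a homeomorphism of the torus
    IsHomeomorph f ∧
    -- `f` commutes with `σ`
    f ∘ σ = σ ∘ f := by
  have hexp : Complex.exp (Real.pi * Complex.I) = -1 := by
    simp [Complex.exp_pi_mul_I]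
  have hfF : f = Fmap := by
    funext p
    by_cases h : (p.1 : ℂ).im ≤ 0
    · obtain ⟨h1, h2⟩ := hf₁ p h
      apply Prod.ext
      · exact h1
      · apply Subtype.ext
        rw [h2]
        show (p.1 : ℂ) ^ 2 * (p.2 : ℂ) = cfun p.1 * (p.2 : ℂ)
        rw [cfun, if_pos h]
    · obtain ⟨h1, h2⟩ := hf₂ p (le_of_lt (lt_of_not_ge h))
      apply Prod.ext
      · exact h1
      · apply Subtype.ext
        rw [h2]
        show (starRingEnd ℂ (p.1 : ℂ)) ^ 2 * (p.2 : ℂ) = cfun p.1 * (p.2 : ℂ)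
        rw [cfun, if_neg h]
  refine ⟨?_, ?_, ?_⟩
  · intro z _ hzim
    rw [Complex.conj_eq_iff_im.mpr hzim]
  · rw [hfF]
    exact Fhomeo.isHomeomorph
  · rw [hfF]
    funext p
    obtain ⟨hσ1, hσ2⟩ := hσ p
    obtain ⟨hσ1', hσ2'⟩ := hσ (Fmap p)
    have hneg : ((σ p).1 : ℂ) = -((p.1 : ℂ)) := by rw [hσ1, hexp]; ring
    apply Prod.ext
    · apply Subtype.ext
      show ((Fmap (σ p)).1 : ℂ) = ((σ (Fmap p)).1 : ℂ)
      rw [hσ1', hexp]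
      show ((σ p).1 : ℂ) = -1 * ((p.1 : ℂ))
      rw [hneg]; ring
    · apply Subtype.ext
      show cfun (σ p).1 * ((σ p).2 : ℂ) = ((σ (Fmap p)).2 : ℂ)
      rw [hσ2', hσ2, cfun_neg p.1 (σ p).1 hneg]
      show starRingEnd ℂ (cfun p.1) * starRingEnd ℂ (p.2 : ℂ)
        = starRingEnd ℂ (cfun p.1 * (p.2 : ℂ))
      rw [map_mul]
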